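/- arXiv:0808.1741 — 8 statements merged into one kernel-verified Lean document; each statement's English description precedes it below -/
import Mathlib

section
/- In a homological spark complex $(F^*,E^*,I^*)$ with maps $\Psi: I^*\to F^*$ and inclusion $E^*\hookrightarrow F^*$, the map $\delta_1$ sending the class of a spark $(a,r)$ (with $da = e - \Psi(r)$, $dr=0$) to $e$ is a well-defined surjective group homomorphism from the group of spark classes $\hat{H}^k$ onto $Z_I^{k+1}(E^*)$, the set of closed elements of $E^{k+1}$ whose cohomology class lies in the image of $\Psi_*: H^{k+1}(I^*)\to H^{k+1}(E^*)$. -/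
/- Harvey–Lawson homological spark complexes, formalized over ℤ-graded cochain
complexes of abelian groups `F`, `E`, `I`, with a cochain map `Ψ : I → F` and an
injective cochain map `ι : E → F` inducing an isomorphism on cohomology.
A spark of degree `k+1` is a pair `(a, r) ∈ F (k+1) × I (k+1+1)` with
`dF a = ι e - Ψ r` for some `e ∈ E (k+1+1)` and `dI r = 0`. -/

/-- The subgroup of sparks of degree `k+1`. -/
def sparkSub (F E I : ℤ → Type*) [∀ k, AddCommGroup (F k)] [∀ k, AddCommGroup (E k)]
    [∀ k, AddCommGroup (I k)]
    (dF : ∀ k, F k →+ F (k + 1)) (dI : ∀ k, I k →+ I (k + 1))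
    (ι : ∀ k, E k →+ F k) (Ψ : ∀ k, I k →+ F k) (k : ℤ) :
    AddSubgroup (F (k + 1) × I (k + 1 + 1)) where
  carrier := {x | dI (k + 1 + 1) x.2 = 0 ∧
    ∃ e : E (k + 1 + 1), dF (k + 1) x.1 = ι (k + 1 + 1) e - Ψ (k + 1 + 1) x.2}
  add_mem' := by
    rintro ⟨a, r⟩ ⟨b, s⟩ ⟨hr, e, he⟩ ⟨hs, f, hf⟩
    refine ⟨by simp [hr, hs], e + f, ?_⟩
    simp only [Prod.fst_add, Prod.snd_add, map_add, he, hf]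
    abel
  zero_mem' := ⟨by simp, 0, by simp⟩
  neg_mem' := by
    rintro ⟨a, r⟩ ⟨hr, e, he⟩
    refine ⟨by simp [hr], -e, ?_⟩
    simp only [Prod.fst_neg, Prod.snd_neg, map_neg, he]
    abel

/-- Spark "coboundaries": pairs of the form `(dF b + Ψ s, -dI s)`.  Two sparks are
equivalent iff their difference is such a pair. -/
def sparkBdry (F I : ℤ → Type*) [∀ k, AddCommGroup (F k)] [∀ k, AddCommGroup (I k)]
    (dF : ∀ k, F k →+ F (k + 1)) (dI : ∀ k, I k →+ I (k + 1))
    (Ψ : ∀ k, I k →+ F k) (k : ℤ) :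
    AddSubgroup (F (k + 1) × I (k + 1 + 1)) where
  carrier := {x | ∃ (b : F k) (s : I (k + 1)),
    x.1 = dF k b + Ψ (k + 1) s ∧ x.2 = -dI (k + 1) s}
  add_mem' := by
    rintro ⟨a, r⟩ ⟨a', r'⟩ ⟨b, s, h1, h2⟩ ⟨b', s', h1', h2'⟩
    simp only at h1 h2 h1' h2'
    refine ⟨b + b', s + s', ?_, ?_⟩
    · simp only [Prod.fst_add, map_add, h1, h1']; abel
    · simp only [Prod.snd_add, map_add, h2, h2']; abel
  zero_mem' := ⟨0, 0, by simp, by simp⟩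
  neg_mem' := by
    rintro ⟨a, r⟩ ⟨b, s, h1, h2⟩
    simp only at h1 h2
    refine ⟨-b, -s, ?_, ?_⟩
    · simp only [Prod.fst_neg, map_neg, h1]; abel
    · simp only [Prod.snd_neg, map_neg, h2, neg_neg]

/-- The group of spark classes `𝐇̂^{k+1}` of the spark complex `(F, E, I)`. -/
def HhatGrp (F E I : ℤ → Type*) [∀ k, AddCommGroup (F k)] [∀ k, AddCommGroup (E k)]
    [∀ k, AddCommGroup (I k)]
    (dF : ∀ k, F k →+ F (k + 1)) (dI : ∀ k, I k →+ I (k + 1))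
    (ι : ∀ k, E k →+ F k) (Ψ : ∀ k, I k →+ F k) (k : ℤ) :=
  sparkSub F E I dF dI ι Ψ k ⧸
    (sparkBdry F I dF dI Ψ k).addSubgroupOf (sparkSub F E I dF dI ι Ψ k)

noncomputable instance (F E I : ℤ → Type*) [∀ k, AddCommGroup (F k)]
    [∀ k, AddCommGroup (E k)] [∀ k, AddCommGroup (I k)]
    (dF : ∀ k, F k →+ F (k + 1)) (dI : ∀ k, I k →+ I (k + 1))
    (ι : ∀ k, E k →+ F k) (Ψ : ∀ k, I k →+ F k) (k : ℤ) :
    AddCommGroup (HhatGrp F E I dF dI ι Ψ k) :=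
  QuotientAddGroup.Quotient.addCommGroup _

/-- `Z_I^{k+1}(E^*)`: the `dE`-closed elements of `E (k+1)` whose cohomology class (computed
in `F`, using `H(E) ≅ H(F)`) lies in the image of `Ψ_* : H^{k+1}(I) → H^{k+1}(E)`. -/
def ZI (F E I : ℤ → Type*) [∀ k, AddCommGroup (F k)] [∀ k, AddCommGroup (E k)]
    [∀ k, AddCommGroup (I k)]
    (dF : ∀ k, F k →+ F (k + 1)) (dE : ∀ k, E k →+ E (k + 1))
    (dI : ∀ k, I k →+ I (k + 1))
    (ι : ∀ k, E k →+ F k) (Ψ : ∀ k, I k →+ F k) (k : ℤ) :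
    AddSubgroup (E (k + 1)) where
  carrier := {e | dE (k + 1) e = 0 ∧ ∃ (r : I (k + 1)) (b : F k),
    dI (k + 1) r = 0 ∧ ι (k + 1) e - Ψ (k + 1) r = dF k b}
  add_mem' := by
    rintro e f ⟨he, r, b, hr, hb⟩ ⟨hf, r', b', hr', hb'⟩
    refine ⟨by simp [he, hf], r + r', b + b', by simp [hr, hr'], ?_⟩
    simp only [map_add]
    rw [← hb, ← hb']; abel
  zero_mem' := ⟨by simp, 0, 0, by simp, by simp⟩
  neg_mem' := by
    rintro e ⟨he, r, b, hr, hb⟩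
    refine ⟨by simp [he], -r, -b, by simp [hr], ?_⟩
    simp only [map_neg]
    rw [← hb]; abel

/-- In a homological spark complex `(F, E, I)`, the map `δ₁` sending the
class of a spark `(a, r)` (with `da = ι e - Ψ r`, `dr = 0`) to `e` is a well-defined
surjective group homomorphism from the group of spark classes onto `Z_I^{k+2}(E^*)`. -/
theorem stmt0
    (F E I : ℤ → Type*) [∀ k, AddCommGroup (F k)] [∀ k, AddCommGroup (E k)]
    [∀ k, AddCommGroup (I k)]
    (dF : ∀ k, F k →+ F (k + 1)) (dE : ∀ k, E k →+ E (k + 1))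
    (dI : ∀ k, I k →+ I (k + 1))
    (ι : ∀ k, E k →+ F k) (Ψ : ∀ k, I k →+ F k)
    -- cochain complexes
    (hdF : ∀ k x, dF (k + 1) (dF k x) = 0)
    (hdE : ∀ k x, dE (k + 1) (dE k x) = 0)
    (hdI : ∀ k x, dI (k + 1) (dI k x) = 0)
    -- vanishing in negative degrees
    (hFneg : ∀ k < (0 : ℤ), Subsingleton (F k))
    (hEneg : ∀ k < (0 : ℤ), Subsingleton (E k))
    (hIneg : ∀ k < (0 : ℤ), Subsingleton (I k))
    -- `ι` and `Ψ` are cochain maps, `ι` injective, `Ψ` injective in degree 0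
    (hιd : ∀ k x, dF k (ι k x) = ι (k + 1) (dE k x))
    (hΨd : ∀ k x, dF k (Ψ k x) = Ψ (k + 1) (dI k x))
    (hιinj : ∀ k, Function.Injective (ι k))
    (hΨ0inj : Function.Injective (Ψ 0))
    -- `Ψ(I^k) ∩ E^k = 0` for `k > 0`
    (hEI : ∀ k, 0 < k → ∀ (e : E k) (r : I k), ι k e = Ψ k r → e = 0)
    -- `ι` induces an isomorphism `H^*(E) ≅ H^*(F)`
    (hqis0 : ∀ x : F 0, dF 0 x = 0 → ∃ e : E 0, x = ι 0 e)
    (hqis_surj : ∀ k (x : F (k + 1)), dF (k + 1) x = 0 →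
      ∃ (e : E (k + 1)) (b : F k), dE (k + 1) e = 0 ∧ x = ι (k + 1) e + dF k b)
    (hqis_inj : ∀ k (e : E (k + 1)), dE (k + 1) e = 0 →
      (∃ b : F k, ι (k + 1) e = dF k b) → ∃ c : E k, e = dE k c)
    (k : ℤ) :
    ∃ δ₁ : HhatGrp F E I dF dI ι Ψ k →+ ZI F E I dF dE dI ι Ψ (k + 1),
      Function.Surjective δ₁ ∧
      ∀ (a : F (k + 1)) (r : I (k + 1 + 1)) (h : (a, r) ∈ sparkSub F E I dF dI ι Ψ k)
        (e : E (k + 1 + 1)),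
        dF (k + 1) a = ι (k + 1 + 1) e - Ψ (k + 1 + 1) r →
        (δ₁ (QuotientAddGroup.mk ⟨(a, r), h⟩) : E (k + 1 + 1)) = e := by
  classical
  set S := sparkSub F E I dF dI ι Ψ k with hS
  have key : ∀ x : S, ∃! e : E (k + 1 + 1),
      dF (k + 1) (x : F (k + 1) × I (k + 1 + 1)).1 =
        ι (k + 1 + 1) e - Ψ (k + 1 + 1) (x : F (k + 1) × I (k + 1 + 1)).2 := by
    rintro ⟨⟨a, r⟩, hr, e, he⟩
    exact ⟨e, he, fun e' he' => hιinj _ (sub_left_inj.mp (he'.symm.trans he))⟩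
  let f : S → E (k + 1 + 1) := fun x => (key x).choose
  have hf : ∀ x : S, dF (k + 1) (x : F (k + 1) × I (k + 1 + 1)).1 =
      ι (k + 1 + 1) (f x) - Ψ (k + 1 + 1) (x : F (k + 1) × I (k + 1 + 1)).2 :=
    fun x => (key x).choose_spec.1
  have huniq : ∀ (x : S) (e : E (k + 1 + 1)),
      dF (k + 1) (x : F (k + 1) × I (k + 1 + 1)).1 =
        ι (k + 1 + 1) e - Ψ (k + 1 + 1) (x : F (k + 1) × I (k + 1 + 1)).2 → f x = e :=
    fun x e he => ((key x).choose_spec.2 e he).symm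
  have hmem : ∀ x : S, f x ∈ ZI F E I dF dE dI ι Ψ (k + 1) := by
    intro x
    obtain ⟨hr, -⟩ := x.2
    refine ⟨?_, x.1.2, x.1.1, hr, (hf x).symm⟩
    apply hιinj
    rw [map_zero, ← hιd]
    have hι : ι (k + 1 + 1) (f x) = dF (k + 1) x.1.1 + Ψ (k + 1 + 1) x.1.2 := by
      rw [hf x]; abel
    rw [hι, map_add, hdF, hΨd, hr, map_zero, zero_add]
  let g : S →+ ZI F E I dF dE dI ι Ψ (k + 1) :=
    { toFun := fun x => ⟨f x, hmem x⟩
      map_zero' := Subtype.ext (huniq 0 0 (by simp))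
      map_add' := fun x y => Subtype.ext (huniq (x + y) (f x + f y) (by
        have hx := hf x; have hy := hf y
        simp only [AddSubgroup.coe_add, Prod.fst_add, Prod.snd_add, map_add, hx, hy]
        abel)) }
  have hker : ∀ x ∈ (sparkBdry F I dF dI Ψ k).addSubgroupOf S, g x = 0 := by
    intro x hx
    rw [AddSubgroup.mem_addSubgroupOf] at hx
    obtain ⟨b, s, h1, h2⟩ := hx
    have hfx : f x = 0 := by
      apply huniq
      rw [h1, h2, map_add, hdF, hΨd, map_neg, map_zero, zero_add, sub_neg_eq_add, zero_add]
    exact Subtype.ext hfx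
  refine ⟨QuotientAddGroup.lift _ g hker, ?_, ?_⟩
  · rintro ⟨e, he, r, b, hr, hb⟩
    exact ⟨QuotientAddGroup.mk ⟨(b, r), ⟨hr, e, hb.symm⟩⟩, Subtype.ext (huniq _ _ hb.symm)⟩
  · intro a r h e hde
    exact huniq ⟨(a, r), h⟩ e hde
end

section
/- In a homological spark complex $(F^*,E^*,I^*)$, the map $\delta_2$ sending the class of a spark $(a,r)$ to the cohomology class $[r]\in H^{k+1}(I^*)$ is a well-defined surjective group homomorphism $\hat{H}^k\to H^{k+1}(I^*)$. -/
/-- `H^{k+2}(I^*)`: the cohomology of the cochain complex `I` in degree `k+2`. -/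
def HIGrp (I : ℤ → Type*) [∀ k, AddCommGroup (I k)]
    (dI : ∀ k, I k →+ I (k + 1)) (k : ℤ) :=
  (dI (k + 1 + 1)).ker ⧸ ((dI (k + 1)).range.addSubgroupOf (dI (k + 1 + 1)).ker)

noncomputable instance (I : ℤ → Type*) [∀ k, AddCommGroup (I k)]
    (dI : ∀ k, I k →+ I (k + 1)) (k : ℤ) : AddCommGroup (HIGrp I dI k) :=
  QuotientAddGroup.Quotient.addCommGroup _

/-- In a homological spark complex `(F, E, I)`, the map `δ₂` sending the
class of a spark `(a, r)` to the cohomology class `[r] ∈ H^{k+2}(I^*)` is a well-defined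
surjective group homomorphism. -/
theorem stmt1
    (F E I : ℤ → Type*) [∀ k, AddCommGroup (F k)] [∀ k, AddCommGroup (E k)]
    [∀ k, AddCommGroup (I k)]
    (dF : ∀ k, F k →+ F (k + 1)) (dE : ∀ k, E k →+ E (k + 1))
    (dI : ∀ k, I k →+ I (k + 1))
    (ι : ∀ k, E k →+ F k) (Ψ : ∀ k, I k →+ F k)
    -- cochain complexes
    (hdF : ∀ k x, dF (k + 1) (dF k x) = 0)
    (hdE : ∀ k x, dE (k + 1) (dE k x) = 0)
    (hdI : ∀ k x, dI (k + 1) (dI k x) = 0)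
    -- vanishing in negative degrees
    (hFneg : ∀ k < (0 : ℤ), Subsingleton (F k))
    (hEneg : ∀ k < (0 : ℤ), Subsingleton (E k))
    (hIneg : ∀ k < (0 : ℤ), Subsingleton (I k))
    -- `ι` and `Ψ` are cochain maps, `ι` injective, `Ψ` injective in degree 0
    (hιd : ∀ k x, dF k (ι k x) = ι (k + 1) (dE k x))
    (hΨd : ∀ k x, dF k (Ψ k x) = Ψ (k + 1) (dI k x))
    (hιinj : ∀ k, Function.Injective (ι k))
    (hΨ0inj : Function.Injective (Ψ 0))
    -- `Ψ(I^k) ∩ E^k = 0` for `k > 0`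
    (hEI : ∀ k, 0 < k → ∀ (e : E k) (r : I k), ι k e = Ψ k r → e = 0)
    -- `ι` induces an isomorphism `H^*(E) ≅ H^*(F)`
    (hqis0 : ∀ x : F 0, dF 0 x = 0 → ∃ e : E 0, x = ι 0 e)
    (hqis_surj : ∀ k (x : F (k + 1)), dF (k + 1) x = 0 →
      ∃ (e : E (k + 1)) (b : F k), dE (k + 1) e = 0 ∧ x = ι (k + 1) e + dF k b)
    (hqis_inj : ∀ k (e : E (k + 1)), dE (k + 1) e = 0 →
      (∃ b : F k, ι (k + 1) e = dF k b) → ∃ c : E k, e = dE k c)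
    (k : ℤ) :
    ∃ δ₂ : HhatGrp F E I dF dI ι Ψ k →+ HIGrp I dI k,
      Function.Surjective δ₂ ∧
      ∀ (a : F (k + 1)) (r : I (k + 1 + 1)) (h : (a, r) ∈ sparkSub F E I dF dI ι Ψ k),
        δ₂ (QuotientAddGroup.mk ⟨(a, r), h⟩) =
          QuotientAddGroup.mk ⟨r, AddMonoidHom.mem_ker.mpr h.1⟩ := by
  classical
  -- the map on sparks: (a, r) ↦ r ∈ ker (dI (k+2))
  set Zmap : sparkSub F E I dF dI ι Ψ k →+ (dI (k + 1 + 1)).ker :=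
    { toFun := fun x => ⟨x.1.2, AddMonoidHom.mem_ker.mpr x.2.1⟩,
      map_zero' := rfl,
      map_add' := fun _ _ => rfl } with hZmap
  set f : sparkSub F E I dF dI ι Ψ k →+ HIGrp I dI k :=
    (QuotientAddGroup.mk' _).comp Zmap with hf
  have hker : ∀ x ∈ (sparkBdry F I dF dI Ψ k).addSubgroupOf
      (sparkSub F E I dF dI ι Ψ k), f x = 0 := by
    rintro ⟨⟨a, r⟩, hx⟩ hmem
    obtain ⟨b, s, h1, h2⟩ := hmem
    refine (QuotientAddGroup.eq_zero_iff _).mpr ?_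
    refine ⟨-s, ?_⟩
    simp only [AddSubgroup.coe_subtype] at h2
    simpa [hZmap] using h2.symm
  refine ⟨QuotientAddGroup.lift _ f hker, ?_, ?_⟩
  · -- surjectivity
    intro y
    induction y using QuotientAddGroup.induction_on with
    | H z =>
      obtain ⟨r, hr⟩ := z
      have hr' : dI (k + 1 + 1) r = 0 := AddMonoidHom.mem_ker.mp hr
      have hclosed : dF (k + 1 + 1) (Ψ (k + 1 + 1) r) = 0 := by
        rw [hΨd, hr', map_zero]
      obtain ⟨e, b, _, hb⟩ := hqis_surj (k + 1) (Ψ (k + 1 + 1) r) hclosed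
      have hspark : ((-b, r) : F (k + 1) × I (k + 1 + 1)) ∈
          sparkSub F E I dF dI ι Ψ k := by
        refine ⟨hr', e, ?_⟩
        simp only [map_neg]
        rw [hb]; abel
      exact ⟨QuotientAddGroup.mk ⟨(-b, r), hspark⟩, rfl⟩
  · intro a r h
    rfl
end

section
/- In a homological spark complex, the kernel $\hat{H}^k_E$ of the homomorphism $\delta_2: \hat{H}^k\to H^{k+1}(I^*)$ is isomorphic to $E^k / Z_I^k(E^*)$, where $Z_I^k(E^*)$ is the group of closed elements of $E^k$ whose cohomology class lies in the image of $\Psi_*: H^k(I^*)\to H^k(E^*)$. Moreover every class in $\hat{H}^k_E$ is representable by a spark of the form $(a,0)$ with $a\in E^k$. -/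
section SparkAux

variable (F E I : ℤ → Type*) [∀ k, AddCommGroup (F k)] [∀ k, AddCommGroup (E k)]
    [∀ k, AddCommGroup (I k)]
    (dF : ∀ k, F k →+ F (k + 1)) (dI : ∀ k, I k →+ I (k + 1))
    (ι : ∀ k, E k →+ F k) (Ψ : ∀ k, I k →+ F k) (k : ℤ)

/-- The map sending a spark `(a, r)` to the cocycle `r`. -/
def sparkToKer : sparkSub F E I dF dI ι Ψ k →+ (dI (k + 1 + 1)).ker where
  toFun x := ⟨x.val.2, x.prop.1⟩
  map_zero' := rfl
  map_add' _ _ := rfl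

/-- The homomorphism `δ₂ : 𝐇̂ → H(I)`. -/
noncomputable def delta2 : HhatGrp F E I dF dI ι Ψ k →+ HIGrp I dI k :=
  QuotientAddGroup.lift _
    ((QuotientAddGroup.mk' _).comp (sparkToKer F E I dF dI ι Ψ k)) (by
      rintro ⟨⟨a, r⟩, h⟩ hmem
      rw [AddSubgroup.mem_addSubgroupOf] at hmem
      obtain ⟨b, s, h1, h2⟩ := hmem
      simp only at h1 h2
      show QuotientAddGroup.mk' _ (sparkToKer F E I dF dI ι Ψ k ⟨(a, r), h⟩) = 0
      rw [QuotientAddGroup.mk'_apply]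
      refine (QuotientAddGroup.eq_zero_iff _).mpr ?_
      rw [AddSubgroup.mem_addSubgroupOf]
      exact ⟨-s, by simp [sparkToKer, h2]⟩)

@[simp] theorem delta2_mk (a : F (k + 1)) (r : I (k + 1 + 1))
    (h : (a, r) ∈ sparkSub F E I dF dI ι Ψ k) :
    delta2 F E I dF dI ι Ψ k (QuotientAddGroup.mk ⟨(a, r), h⟩) =
      QuotientAddGroup.mk ⟨r, AddMonoidHom.mem_ker.mpr h.1⟩ := rfl

end SparkAux

/-- Every spark whose underlying `I`-cocycle is a coboundary is equivalent to a spark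
of the form `(ι e, 0)` with `e ∈ E`. -/
theorem spark_repr (F E I : ℤ → Type*) [∀ k, AddCommGroup (F k)] [∀ k, AddCommGroup (E k)]
    [∀ k, AddCommGroup (I k)]
    (dF : ∀ k, F k →+ F (k + 1)) (dE : ∀ k, E k →+ E (k + 1))
    (dI : ∀ k, I k →+ I (k + 1))
    (ι : ∀ k, E k →+ F k) (Ψ : ∀ k, I k →+ F k)
    (hdF : ∀ k x, dF (k + 1) (dF k x) = 0)
    (hιd : ∀ k x, dF k (ι k x) = ι (k + 1) (dE k x))
    (hΨd : ∀ k x, dF k (Ψ k x) = Ψ (k + 1) (dI k x))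
    (hιinj : ∀ k, Function.Injective (ι k))
    (hqis_surj : ∀ k (x : F (k + 1)), dF (k + 1) x = 0 →
      ∃ (e : E (k + 1)) (b : F k), dE (k + 1) e = 0 ∧ x = ι (k + 1) e + dF k b)
    (hqis_inj : ∀ k (e : E (k + 1)), dE (k + 1) e = 0 →
      (∃ b : F k, ι (k + 1) e = dF k b) → ∃ c : E k, e = dE k c)
    (k : ℤ) (a : F (k + 1)) (r : I (k + 1 + 1))
    (h : (a, r) ∈ sparkSub F E I dF dI ι Ψ k)
    (s : I (k + 1)) (hs : dI (k + 1) s = r) :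
    ∃ e : E (k + 1),
      ((a, r) - (ι (k + 1) e, (0 : I (k + 1 + 1)))) ∈ sparkBdry F I dF dI Ψ k := by
  obtain ⟨hr, e₂, he₂⟩ := h
  have hda' : dF (k + 1) (a + Ψ (k + 1) s) = ι (k + 1 + 1) e₂ := by
    rw [map_add, he₂, hΨd (k + 1) s, hs]; abel
  have hce₂ : dE (k + 1 + 1) e₂ = 0 := by
    apply hιinj
    rw [map_zero, ← hιd, ← hda', hdF]
  obtain ⟨c, hc⟩ := hqis_inj (k + 1) e₂ hce₂ ⟨a + Ψ (k + 1) s, hda'.symm⟩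
  have hclosed : dF (k + 1) (a + Ψ (k + 1) s - ι (k + 1) c) = 0 := by
    rw [map_sub, hda', hιd, ← hc, sub_self]
  obtain ⟨e₀, b, he₀, hb⟩ := hqis_surj k (a + Ψ (k + 1) s - ι (k + 1) c) hclosed
  rw [sub_eq_iff_eq_add] at hb
  have ha : a = ι (k + 1) e₀ + dF k b + ι (k + 1) c - Ψ (k + 1) s :=
    eq_sub_of_add_eq hb
  refine ⟨e₀ + c, b, -s, ?_, ?_⟩
  · show a - ι (k + 1) (e₀ + c) = dF k b + Ψ (k + 1) (-s)
    rw [ha, map_add, map_neg]; abel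
  · show r - 0 = -dI (k + 1) (-s)
    rw [map_neg, neg_neg, hs, sub_zero]

/-- In a homological spark complex, the kernel `𝐇̂^k_E` of
`δ₂ : 𝐇̂^k → H^{k+1}(I^*)` is isomorphic to `E^k / Z_I^k(E^*)`, and every class in
`𝐇̂^k_E` is representable by a spark of the form `(a, 0)` with `a ∈ E^k`. -/
theorem stmt2
    (F E I : ℤ → Type*) [∀ k, AddCommGroup (F k)] [∀ k, AddCommGroup (E k)]
    [∀ k, AddCommGroup (I k)]
    (dF : ∀ k, F k →+ F (k + 1)) (dE : ∀ k, E k →+ E (k + 1))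
    (dI : ∀ k, I k →+ I (k + 1))
    (ι : ∀ k, E k →+ F k) (Ψ : ∀ k, I k →+ F k)
    -- cochain complexes
    (hdF : ∀ k x, dF (k + 1) (dF k x) = 0)
    (hdE : ∀ k x, dE (k + 1) (dE k x) = 0)
    (hdI : ∀ k x, dI (k + 1) (dI k x) = 0)
    -- vanishing in negative degrees
    (hFneg : ∀ k < (0 : ℤ), Subsingleton (F k))
    (hEneg : ∀ k < (0 : ℤ), Subsingleton (E k))
    (hIneg : ∀ k < (0 : ℤ), Subsingleton (I k))
    -- `ι` and `Ψ` are cochain maps, `ι` injective, `Ψ` injective in degree 0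
    (hιd : ∀ k x, dF k (ι k x) = ι (k + 1) (dE k x))
    (hΨd : ∀ k x, dF k (Ψ k x) = Ψ (k + 1) (dI k x))
    (hιinj : ∀ k, Function.Injective (ι k))
    (hΨ0inj : Function.Injective (Ψ 0))
    -- `Ψ(I^k) ∩ E^k = 0` for `k > 0`
    (hEI : ∀ k, 0 < k → ∀ (e : E k) (r : I k), ι k e = Ψ k r → e = 0)
    -- `ι` induces an isomorphism `H^*(E) ≅ H^*(F)`
    (hqis0 : ∀ x : F 0, dF 0 x = 0 → ∃ e : E 0, x = ι 0 e)
    (hqis_surj : ∀ k (x : F (k + 1)), dF (k + 1) x = 0 →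
      ∃ (e : E (k + 1)) (b : F k), dE (k + 1) e = 0 ∧ x = ι (k + 1) e + dF k b)
    (hqis_inj : ∀ k (e : E (k + 1)), dE (k + 1) e = 0 →
      (∃ b : F k, ι (k + 1) e = dF k b) → ∃ c : E k, e = dE k c)
    (k : ℤ) :
    ∃ δ₂ : HhatGrp F E I dF dI ι Ψ k →+ HIGrp I dI k,
      (∀ (a : F (k + 1)) (r : I (k + 1 + 1)) (h : (a, r) ∈ sparkSub F E I dF dI ι Ψ k),
        δ₂ (QuotientAddGroup.mk ⟨(a, r), h⟩) =
          QuotientAddGroup.mk ⟨r, AddMonoidHom.mem_ker.mpr h.1⟩) ∧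
      Nonempty (δ₂.ker ≃+ (E (k + 1) ⧸ ZI F E I dF dE dI ι Ψ k)) ∧
      ∀ α : HhatGrp F E I dF dI ι Ψ k, δ₂ α = 0 →
        ∃ (e : E (k + 1)) (h : (ι (k + 1) e, (0 : I (k + 1 + 1))) ∈
            sparkSub F E I dF dI ι Ψ k),
          α = QuotientAddGroup.mk ⟨(ι (k + 1) e, 0), h⟩ := by
  classical
  have hmemE : ∀ e : E (k + 1),
      (ι (k + 1) e, (0 : I (k + 1 + 1))) ∈ sparkSub F E I dF dI ι Ψ k := fun e =>
    ⟨by simp, dE (k + 1) e, by rw [hιd, map_zero, sub_zero]⟩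
  have hrep : ∀ α : HhatGrp F E I dF dI ι Ψ k, delta2 F E I dF dI ι Ψ k α = 0 →
      ∃ (e : E (k + 1)) (h : (ι (k + 1) e, (0 : I (k + 1 + 1))) ∈
          sparkSub F E I dF dI ι Ψ k),
        α = QuotientAddGroup.mk ⟨(ι (k + 1) e, 0), h⟩ := by
    intro α hα
    induction α using QuotientAddGroup.induction_on with
    | H x =>
      obtain ⟨⟨a, r⟩, h⟩ := x
      rw [delta2_mk] at hα
      replace hα := (QuotientAddGroup.eq_zero_iff _).mp hα
      rw [AddSubgroup.mem_addSubgroupOf] at hα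
      obtain ⟨s, hs⟩ := hα
      obtain ⟨e, he⟩ := spark_repr F E I dF dE dI ι Ψ hdF hιd hΨd hιinj hqis_surj
        hqis_inj k a r h s hs
      refine ⟨e, hmemE e, ?_⟩
      refine QuotientAddGroup.eq.mpr ?_
      rw [AddSubgroup.mem_addSubgroupOf]
      show (-(a, r) + (ι (k + 1) e, (0 : I (k + 1 + 1)))) ∈ sparkBdry F I dF dI Ψ k
      rw [neg_add_eq_sub, ← neg_sub]
      exact (sparkBdry F I dF dI Ψ k).neg_mem he
  refine ⟨delta2 F E I dF dI ι Ψ k, fun a r h => rfl, ?_, hrep⟩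
  let ψ : E (k + 1) →+ sparkSub F E I dF dI ι Ψ k :=
    { toFun := fun e => ⟨(ι (k + 1) e, 0), hmemE e⟩
      map_zero' := Subtype.ext (by simp [Prod.ext_iff])
      map_add' := fun e f => Subtype.ext (by simp [Prod.ext_iff]) }
  let φ : E (k + 1) →+ HhatGrp F E I dF dI ι Ψ k :=
    (QuotientAddGroup.mk' _).comp ψ
  have hφ0 : ∀ e : E (k + 1), delta2 F E I dF dI ι Ψ k (φ e) = 0 := by
    intro e
    show delta2 F E I dF dI ι Ψ k
      (QuotientAddGroup.mk ⟨(ι (k + 1) e, 0), hmemE e⟩) = 0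
    rw [delta2_mk]
    have : (⟨(0 : I (k + 1 + 1)), AddMonoidHom.mem_ker.mpr (hmemE e).1⟩ :
        (dI (k + 1 + 1)).ker) = 0 := Subtype.ext rfl
    rw [this]
    rfl
  let φ' : E (k + 1) →+ (delta2 F E I dF dI ι Ψ k).ker :=
    φ.codRestrict _ fun e => AddMonoidHom.mem_ker.mpr (hφ0 e)
  have hsurj : Function.Surjective φ' := by
    rintro ⟨α, hα⟩
    obtain ⟨e, h, rfl⟩ := hrep α (AddMonoidHom.mem_ker.mp hα)
    exact ⟨e, Subtype.ext rfl⟩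
  have hker : φ'.ker = ZI F E I dF dE dI ι Ψ k := by
    ext e
    rw [AddMonoidHom.mem_ker]
    constructor
    · intro h0
      have h1 : φ e = 0 := congrArg Subtype.val h0
      have h2 : (⟨(ι (k + 1) e, 0), hmemE e⟩ : sparkSub F E I dF dI ι Ψ k) ∈
          (sparkBdry F I dF dI Ψ k).addSubgroupOf (sparkSub F E I dF dI ι Ψ k) := by
        rwa [← QuotientAddGroup.eq_zero_iff]
      rw [AddSubgroup.mem_addSubgroupOf] at h2
      obtain ⟨b, s, hb, hs⟩ := h2
      simp only at hb hs
      have hdIs : dI (k + 1) s = 0 := neg_eq_zero.mp hs.symm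
      refine ⟨?_, s, b, hdIs, ?_⟩
      · apply hιinj
        rw [map_zero, ← hιd, hb, map_add, hdF, hΨd, hdIs, map_zero, zero_add]
      · rw [hb]; abel
    · rintro ⟨hde, r, b, hr, hb⟩
      apply Subtype.ext
      show φ e = 0
      show QuotientAddGroup.mk' _ (⟨(ι (k + 1) e, 0), hmemE e⟩ :
        sparkSub F E I dF dI ι Ψ k) = 0
      rw [QuotientAddGroup.mk'_apply]
      refine (QuotientAddGroup.eq_zero_iff _).mpr ?_
      rw [AddSubgroup.mem_addSubgroupOf]
      refine ⟨b, r, ?_, ?_⟩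
      · show ι (k + 1) e = dF k b + Ψ (k + 1) r
        rw [← hb]; abel
      · show (0 : I (k + 1 + 1)) = -dI (k + 1) r
        rw [hr, neg_zero]
  exact ⟨((QuotientAddGroup.quotientKerEquivOfSurjective φ' hsurj).symm.trans
    (QuotientAddGroup.quotientAddEquivOfEq hker))⟩
end

section
/- Associated to any homological spark complex $(F^*,E^*,I^*)$ there is a short exact sequence $0\to H^k(G^*)\to \hat{H}^k \xrightarrow{\delta_1} Z_I^{k+1}(E^*)\to 0$, where $G^*$ is the cone complex $G^k = F^k\oplus I^{k+1}$ with differential $D(a,r)=(da+\Psi(r),-dr)$. -/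
/-- Cocycles of degree `k+1` of the cone complex `G^* = F^* ⊕ I^{*+1}`,
`D(a, r) = (da + Ψ r, -dr)`. -/
def coneZ (F I : ℤ → Type*) [∀ k, AddCommGroup (F k)] [∀ k, AddCommGroup (I k)]
    (dF : ∀ k, F k →+ F (k + 1)) (dI : ∀ k, I k →+ I (k + 1))
    (Ψ : ∀ k, I k →+ F k) (k : ℤ) :
    AddSubgroup (F (k + 1) × I (k + 1 + 1)) where
  carrier := {x | dF (k + 1) x.1 + Ψ (k + 1 + 1) x.2 = 0 ∧ dI (k + 1 + 1) x.2 = 0}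
  add_mem' := by
    rintro ⟨a, r⟩ ⟨a', r'⟩ ⟨h1, h2⟩ ⟨h1', h2'⟩
    constructor
    · simp only [Prod.fst_add, Prod.snd_add, map_add]
      rw [show (dF (k+1)) a + (dF (k+1)) a' + ((Ψ (k+1+1)) r + (Ψ (k+1+1)) r')
          = ((dF (k+1)) a + (Ψ (k+1+1)) r) + ((dF (k+1)) a' + (Ψ (k+1+1)) r') by abel,
        h1, h1', add_zero]
    · simp only [Prod.snd_add, map_add, h2, h2', add_zero]
  zero_mem' := by constructor <;> simp
  neg_mem' := by
    rintro ⟨a, r⟩ ⟨h1, h2⟩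
    constructor
    · simp only [Prod.fst_neg, Prod.snd_neg, map_neg, ← neg_add, h1, neg_zero]
    · simp only [Prod.snd_neg, map_neg, h2, neg_zero]

/-- The degree-`k+1` cohomology of the cone complex `G^*`. -/
def HconeGrp (F I : ℤ → Type*) [∀ k, AddCommGroup (F k)] [∀ k, AddCommGroup (I k)]
    (dF : ∀ k, F k →+ F (k + 1)) (dI : ∀ k, I k →+ I (k + 1))
    (Ψ : ∀ k, I k →+ F k) (k : ℤ) :=
  coneZ F I dF dI Ψ k ⧸ (sparkBdry F I dF dI Ψ k).addSubgroupOf (coneZ F I dF dI Ψ k)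

noncomputable instance (F I : ℤ → Type*) [∀ k, AddCommGroup (F k)] [∀ k, AddCommGroup (I k)]
    (dF : ∀ k, F k →+ F (k + 1)) (dI : ∀ k, I k →+ I (k + 1))
    (Ψ : ∀ k, I k →+ F k) (k : ℤ) : AddCommGroup (HconeGrp F I dF dI Ψ k) :=
  QuotientAddGroup.Quotient.addCommGroup _

/-- Associated to any homological spark complex `(F, E, I)` there is a
short exact sequence `0 → H^{k+1}(G^*) → 𝐇̂^{k+1} → Z_I^{k+2}(E^*) → 0`, where `G^*` is the
cone complex `G^k = F^k ⊕ I^{k+1}` with `D(a, r) = (da + Ψ r, -dr)`. -/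
theorem stmt3
    (F E I : ℤ → Type*) [∀ k, AddCommGroup (F k)] [∀ k, AddCommGroup (E k)]
    [∀ k, AddCommGroup (I k)]
    (dF : ∀ k, F k →+ F (k + 1)) (dE : ∀ k, E k →+ E (k + 1))
    (dI : ∀ k, I k →+ I (k + 1))
    (ι : ∀ k, E k →+ F k) (Ψ : ∀ k, I k →+ F k)
    -- cochain complexes
    (hdF : ∀ k x, dF (k + 1) (dF k x) = 0)
    (hdE : ∀ k x, dE (k + 1) (dE k x) = 0)
    (hdI : ∀ k x, dI (k + 1) (dI k x) = 0)
    -- vanishing in negative degrees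
    (hFneg : ∀ k < (0 : ℤ), Subsingleton (F k))
    (hEneg : ∀ k < (0 : ℤ), Subsingleton (E k))
    (hIneg : ∀ k < (0 : ℤ), Subsingleton (I k))
    -- `ι` and `Ψ` are cochain maps, `ι` injective, `Ψ` injective in degree 0
    (hιd : ∀ k x, dF k (ι k x) = ι (k + 1) (dE k x))
    (hΨd : ∀ k x, dF k (Ψ k x) = Ψ (k + 1) (dI k x))
    (hιinj : ∀ k, Function.Injective (ι k))
    (hΨ0inj : Function.Injective (Ψ 0))
    -- `Ψ(I^k) ∩ E^k = 0` for `k > 0`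
    (hEI : ∀ k, 0 < k → ∀ (e : E k) (r : I k), ι k e = Ψ k r → e = 0)
    -- `ι` induces an isomorphism `H^*(E) ≅ H^*(F)`
    (hqis0 : ∀ x : F 0, dF 0 x = 0 → ∃ e : E 0, x = ι 0 e)
    (hqis_surj : ∀ k (x : F (k + 1)), dF (k + 1) x = 0 →
      ∃ (e : E (k + 1)) (b : F k), dE (k + 1) e = 0 ∧ x = ι (k + 1) e + dF k b)
    (hqis_inj : ∀ k (e : E (k + 1)), dE (k + 1) e = 0 →
      (∃ b : F k, ι (k + 1) e = dF k b) → ∃ c : E k, e = dE k c)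
    (k : ℤ) :
    ∃ (δ₁ : HhatGrp F E I dF dI ι Ψ k →+ ZI F E I dF dE dI ι Ψ (k + 1))
      (j : HconeGrp F I dF dI Ψ k →+ HhatGrp F E I dF dI ι Ψ k),
      (∀ (a : F (k + 1)) (r : I (k + 1 + 1)) (h : (a, r) ∈ sparkSub F E I dF dI ι Ψ k)
        (e : E (k + 1 + 1)),
        dF (k + 1) a = ι (k + 1 + 1) e - Ψ (k + 1 + 1) r →
        (δ₁ (QuotientAddGroup.mk ⟨(a, r), h⟩) : E (k + 1 + 1)) = e) ∧
      Function.Surjective δ₁ ∧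
      Function.Injective j ∧
      (∀ (x : F (k + 1) × I (k + 1 + 1)) (hx : x ∈ coneZ F I dF dI Ψ k)
        (hx' : x ∈ sparkSub F E I dF dI ι Ψ k),
        j (QuotientAddGroup.mk ⟨x, hx⟩) = QuotientAddGroup.mk ⟨x, hx'⟩) ∧
      (∀ α, δ₁ α = 0 ↔ α ∈ Set.range j) := by
  classical
  -- membership unfolding lemmas
  have memSp : ∀ x : F (k+1) × I (k+1+1), x ∈ sparkSub F E I dF dI ι Ψ k ↔
      (dI (k+1+1) x.2 = 0 ∧ ∃ e, dF (k+1) x.1 = ι (k+1+1) e - Ψ (k+1+1) x.2) :=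
    fun _ => Iff.rfl
  have memB : ∀ x : F (k+1) × I (k+1+1), x ∈ sparkBdry F I dF dI Ψ k ↔
      ∃ b s, x.1 = dF k b + Ψ (k+1) s ∧ x.2 = -dI (k+1) s := fun _ => Iff.rfl
  have memC : ∀ x : F (k+1) × I (k+1+1), x ∈ coneZ F I dF dI Ψ k ↔
      (dF (k+1) x.1 + Ψ (k+1+1) x.2 = 0 ∧ dI (k+1+1) x.2 = 0) := fun _ => Iff.rfl
  -- uniqueness of `e` for a given spark
  have euniq : ∀ (x : F (k+1) × I (k+1+1)) (e e' : E (k+1+1)),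
      dF (k+1) x.1 = ι (k+1+1) e - Ψ (k+1+1) x.2 →
      dF (k+1) x.1 = ι (k+1+1) e' - Ψ (k+1+1) x.2 → e = e' := by
    intro x e e' h h'
    have : ι (k+1+1) e - Ψ (k+1+1) x.2 = ι (k+1+1) e' - Ψ (k+1+1) x.2 := h.symm.trans h'
    exact hιinj _ (sub_left_inj.mp this)
  let eOf : ∀ _ : sparkSub F E I dF dI ι Ψ k, E (k+1+1) :=
    fun x => (((memSp x.1).mp x.2).2).choose
  have eOf_spec : ∀ x : sparkSub F E I dF dI ι Ψ k,
      dF (k+1) (x : F (k+1) × I (k+1+1)).1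
        = ι (k+1+1) (eOf x) - Ψ (k+1+1) (x : F (k+1) × I (k+1+1)).2 :=
    fun x => (((memSp x.1).mp x.2).2).choose_spec
  have eOf_eq : ∀ (x : sparkSub F E I dF dI ι Ψ k) (e : E (k+1+1)),
      dF (k+1) (x : F (k+1) × I (k+1+1)).1
        = ι (k+1+1) e - Ψ (k+1+1) (x : F (k+1) × I (k+1+1)).2 → eOf x = e :=
    fun x e h => euniq _ _ _ (eOf_spec x) h
  -- the extracted `e` lies in `Z_I`
  have hZI : ∀ x : sparkSub F E I dF dI ι Ψ k, eOf x ∈ ZI F E I dF dE dI ι Ψ (k+1) := by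
    intro x
    obtain ⟨hdr, -⟩ := (memSp x.1).mp x.2
    have hspec := eOf_spec x
    have hιe : ι (k+1+1) (eOf x) = dF (k+1) (x : F (k+1) × I (k+1+1)).1
        + Ψ (k+1+1) (x : F (k+1) × I (k+1+1)).2 := by
      rw [hspec]; abel
    refine ⟨?_, (x : F (k+1) × I (k+1+1)).2, (x : F (k+1) × I (k+1+1)).1, hdr, ?_⟩
    · apply hιinj (k+1+1+1)
      rw [← hιd, hιe, map_add, map_zero, hdF, hΨd, hdr, map_zero, zero_add]
    · exact hspec.symm
  -- the additive map `f : sparkSub →+ ZI`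
  let f : sparkSub F E I dF dI ι Ψ k →+ ZI F E I dF dE dI ι Ψ (k+1) :=
    { toFun := fun x => ⟨eOf x, hZI x⟩
      map_zero' := Subtype.ext (eOf_eq 0 0 (by simp))
      map_add' := fun x y => Subtype.ext (eOf_eq (x + y) (eOf x + eOf y) (by
        have hx := eOf_spec x
        have hy := eOf_spec y
        simp only [AddSubgroup.coe_add, Prod.fst_add, Prod.snd_add, map_add, hx, hy]
        abel)) }
  -- f kills boundaries
  set N := (sparkBdry F I dF dI Ψ k).addSubgroupOf (sparkSub F E I dF dI ι Ψ k) with hN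
  have fN : ∀ x ∈ N, f x = 0 := by
    intro x hx
    obtain ⟨b, s, h1, h2⟩ := (memB x.1).mp (AddSubgroup.mem_addSubgroupOf.mp hx)
    refine Subtype.ext (eOf_eq x 0 ?_)
    rw [h1, h2, map_add, hdF, hΨd, map_zero, zero_sub, map_neg, neg_neg, zero_add]
  let δ₁ : HhatGrp F E I dF dI ι Ψ k →+ ZI F E I dF dE dI ι Ψ (k+1) :=
    QuotientAddGroup.lift N f fN
  -- coneZ included in sparkSub
  have coneSub : ∀ x ∈ coneZ F I dF dI Ψ k, x ∈ sparkSub F E I dF dI ι Ψ k := by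
    intro x hx
    obtain ⟨h1, h2⟩ := (memC x).mp hx
    refine (memSp x).mpr ⟨h2, 0, ?_⟩
    rw [map_zero, zero_sub, eq_neg_iff_add_eq_zero]
    exact h1
  let g : coneZ F I dF dI Ψ k →+ sparkSub F E I dF dI ι Ψ k :=
    { toFun := fun x => ⟨x.1, coneSub x.1 x.2⟩
      map_zero' := rfl
      map_add' := fun _ _ => rfl }
  let j : HconeGrp F I dF dI Ψ k →+ HhatGrp F E I dF dI ι Ψ k :=
    QuotientAddGroup.lift ((sparkBdry F I dF dI Ψ k).addSubgroupOf (coneZ F I dF dI Ψ k))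
      ((QuotientAddGroup.mk' N).comp g) (by
        intro x hx
        have hb : (g x : F (k+1) × I (k+1+1)) ∈ sparkBdry F I dF dI Ψ k :=
          AddSubgroup.mem_addSubgroupOf.mp hx
        exact (QuotientAddGroup.eq_zero_iff _).mpr (AddSubgroup.mem_addSubgroupOf.mpr hb))
  refine ⟨δ₁, j, ?_, ?_, ?_, ?_, ?_⟩
  · -- δ₁ computes e
    intro a r h e he
    exact eOf_eq ⟨(a, r), h⟩ e he
  · -- surjectivity of δ₁
    rintro ⟨e, he⟩
    obtain ⟨he0, r, b, hr, hb⟩ := he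
    have hmem : ((b, r) : F (k+1) × I (k+1+1)) ∈ sparkSub F E I dF dI ι Ψ k :=
      (memSp _).mpr ⟨hr, e, hb.symm⟩
    exact ⟨QuotientAddGroup.mk ⟨(b, r), hmem⟩, Subtype.ext (eOf_eq ⟨(b, r), hmem⟩ e hb.symm)⟩
  · -- injectivity of j
    refine (injective_iff_map_eq_zero j).mpr ?_
    intro α hα
    induction α using QuotientAddGroup.induction_on with
    | H x =>
      have hgx : (g x : F (k+1) × I (k+1+1)) ∈ sparkBdry F I dF dI Ψ k :=
        AddSubgroup.mem_addSubgroupOf.mp ((QuotientAddGroup.eq_zero_iff (g x)).mp hα)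
      exact (QuotientAddGroup.eq_zero_iff x).mpr (AddSubgroup.mem_addSubgroupOf.mpr hgx)
  · -- j is induced by the identity on cocycles
    intro x hx hx'
    rfl
  · -- exactness
    intro α
    constructor
    · intro hα
      induction α using QuotientAddGroup.induction_on with
      | H x =>
        have h0 : eOf x = 0 := congrArg Subtype.val hα
        have hspec := eOf_spec x
        rw [h0, map_zero, zero_sub] at hspec
        have hc : (x : F (k+1) × I (k+1+1)) ∈ coneZ F I dF dI Ψ k :=
          (memC _).mpr ⟨by rw [hspec]; abel, ((memSp x.1).mp x.2).1⟩
        exact ⟨QuotientAddGroup.mk ⟨x.1, hc⟩, rfl⟩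
    · rintro ⟨β, rfl⟩
      induction β using QuotientAddGroup.induction_on with
      | H x =>
        obtain ⟨h1, h2⟩ := (memC x.1).mp x.2
        refine Subtype.ext (eOf_eq (g x) 0 ?_)
        rw [map_zero, zero_sub, eq_neg_iff_add_eq_zero]
        exact h1
end

section
/- Associated to any homological spark complex $(F^*,E^*,I^*)$ there is a short exact sequence $0\to \hat{H}^k_E\to \hat{H}^k \xrightarrow{\delta_2} H^{k+1}(I^*)\to 0$, where $\hat{H}^k_E = \ker\delta_2$ and $\delta_2$ sends a spark class $[(a,r)]$ to $[r]$. -/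
/-- Associated to any homological spark complex `(F, E, I)` there is a
short exact sequence `0 → 𝐇̂^k_E → 𝐇̂^k → H^{k+1}(I^*) → 0`, where `𝐇̂^k_E = ker δ₂` and
`δ₂` sends a spark class `[(a, r)]` to `[r]`. -/
theorem stmt4
    (F E I : ℤ → Type*) [∀ k, AddCommGroup (F k)] [∀ k, AddCommGroup (E k)]
    [∀ k, AddCommGroup (I k)]
    (dF : ∀ k, F k →+ F (k + 1)) (dE : ∀ k, E k →+ E (k + 1))
    (dI : ∀ k, I k →+ I (k + 1))
    (ι : ∀ k, E k →+ F k) (Ψ : ∀ k, I k →+ F k)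
    -- cochain complexes
    (hdF : ∀ k x, dF (k + 1) (dF k x) = 0)
    (hdE : ∀ k x, dE (k + 1) (dE k x) = 0)
    (hdI : ∀ k x, dI (k + 1) (dI k x) = 0)
    -- vanishing in negative degrees
    (hFneg : ∀ k < (0 : ℤ), Subsingleton (F k))
    (hEneg : ∀ k < (0 : ℤ), Subsingleton (E k))
    (hIneg : ∀ k < (0 : ℤ), Subsingleton (I k))
    -- `ι` and `Ψ` are cochain maps, `ι` injective, `Ψ` injective in degree 0
    (hιd : ∀ k x, dF k (ι k x) = ι (k + 1) (dE k x))
    (hΨd : ∀ k x, dF k (Ψ k x) = Ψ (k + 1) (dI k x))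
    (hιinj : ∀ k, Function.Injective (ι k))
    (hΨ0inj : Function.Injective (Ψ 0))
    -- `Ψ(I^k) ∩ E^k = 0` for `k > 0`
    (hEI : ∀ k, 0 < k → ∀ (e : E k) (r : I k), ι k e = Ψ k r → e = 0)
    -- `ι` induces an isomorphism `H^*(E) ≅ H^*(F)`
    (hqis0 : ∀ x : F 0, dF 0 x = 0 → ∃ e : E 0, x = ι 0 e)
    (hqis_surj : ∀ k (x : F (k + 1)), dF (k + 1) x = 0 →
      ∃ (e : E (k + 1)) (b : F k), dE (k + 1) e = 0 ∧ x = ι (k + 1) e + dF k b)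
    (hqis_inj : ∀ k (e : E (k + 1)), dE (k + 1) e = 0 →
      (∃ b : F k, ι (k + 1) e = dF k b) → ∃ c : E k, e = dE k c)
    (k : ℤ) :
    ∃ δ₂ : HhatGrp F E I dF dI ι Ψ k →+ HIGrp I dI k,
      (∀ (a : F (k + 1)) (r : I (k + 1 + 1)) (h : (a, r) ∈ sparkSub F E I dF dI ι Ψ k),
        δ₂ (QuotientAddGroup.mk ⟨(a, r), h⟩) =
          QuotientAddGroup.mk ⟨r, AddMonoidHom.mem_ker.mpr h.1⟩) ∧
      -- exactness: the inclusion of `𝐇̂^k_E = ker δ₂` is injective with image `ker δ₂`,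
      -- and `δ₂` is surjective
      Function.Injective δ₂.ker.subtype ∧
      (δ₂.ker.subtype.range = δ₂.ker) ∧
      Function.Surjective δ₂ := by
  classical
  set S := sparkSub F E I dF dI ι Ψ k with hS
  set N := (sparkBdry F I dF dI Ψ k).addSubgroupOf S with hN
  -- the map on spark representatives
  let f : S →+ HIGrp I dI k :=
    { toFun := fun x => QuotientAddGroup.mk
        ⟨x.1.2, AddMonoidHom.mem_ker.mpr x.2.1⟩
      map_zero' := by rfl
      map_add' := fun x y => by rfl }
  have hf : ∀ x ∈ N, f x = 0 := by
    rintro ⟨⟨a, r⟩, hx⟩ hxN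
    obtain ⟨b, s, h1, h2⟩ := hxN
    show (QuotientAddGroup.mk _ : HIGrp I dI k) = 0
    rw [QuotientAddGroup.eq_zero_iff, AddSubgroup.mem_addSubgroupOf]
    exact ⟨-s, by rw [map_neg]; exact h2.symm⟩
  refine ⟨QuotientAddGroup.lift N f hf, ?_, Subtype.coe_injective,
    AddSubgroup.range_subtype _, ?_⟩
  · intro a r h
    rfl
  · -- surjectivity
    intro y
    induction y using QuotientAddGroup.induction_on with
    | H z =>
      obtain ⟨r, hr⟩ := z
      have hr' : dI (k + 1 + 1) r = 0 := hr
      have hclosed : dF (k + 1 + 1) (Ψ (k + 1 + 1) r) = 0 := by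
        rw [hΨd, hr', map_zero]
      obtain ⟨e, b, he, hb⟩ := hqis_surj (k + 1) (Ψ (k + 1 + 1) r) hclosed
      have hmem : ((-b, r) : F (k + 1) × I (k + 1 + 1)) ∈ S := by
        refine ⟨hr', e, ?_⟩
        simp only [map_neg]
        rw [hb]; abel
      exact ⟨QuotientAddGroup.mk ⟨(-b, r), hmem⟩, rfl⟩
end

section
/- A quasi-isomorphism of homological spark complexes $(F^*,E^*,I^*)\to(\bar F^*,\bar E^*,\bar I^*)$ (i.e., a commuting diagram with $\psi: I^*\to\bar I^*$, an injection $i: F^*\hookrightarrow \bar F^*$, identity on $E^*=\bar E^*$, such that $\psi$ induces an isomorphism $H^*(I^*)\cong H^*(\bar I^*)$) induces an isomorphism of the associated groups of spark classes $\hat{H}^*(F^*,E^*,I^*)\cong \hat{H}^*(\bar F^*,\bar E^*,\bar I^*)$. -/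
/-- A quasi-isomorphism of homological spark complexes
`(F, E, I) → (F̄, Ē, Ī)` (with `Ē = E`) induces an isomorphism of the associated groups of
spark classes, given on representatives by `[(a, r)] ↦ [(i a, ψ r)]`. -/
theorem stmt5
    (F E I : ℤ → Type*) [∀ k, AddCommGroup (F k)] [∀ k, AddCommGroup (E k)]
    [∀ k, AddCommGroup (I k)]
    (dF : ∀ k, F k →+ F (k + 1)) (dE : ∀ k, E k →+ E (k + 1))
    (dI : ∀ k, I k →+ I (k + 1))
    (ι : ∀ k, E k →+ F k) (Ψ : ∀ k, I k →+ F k)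
    -- cochain complexes
    (hdF : ∀ k x, dF (k + 1) (dF k x) = 0)
    (hdE : ∀ k x, dE (k + 1) (dE k x) = 0)
    (hdI : ∀ k x, dI (k + 1) (dI k x) = 0)
    -- vanishing in negative degrees
    (hFneg : ∀ k < (0 : ℤ), Subsingleton (F k))
    (hEneg : ∀ k < (0 : ℤ), Subsingleton (E k))
    (hIneg : ∀ k < (0 : ℤ), Subsingleton (I k))
    -- `ι` and `Ψ` are cochain maps, `ι` injective, `Ψ` injective in degree 0
    (hιd : ∀ k x, dF k (ι k x) = ι (k + 1) (dE k x))
    (hΨd : ∀ k x, dF k (Ψ k x) = Ψ (k + 1) (dI k x))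
    (hιinj : ∀ k, Function.Injective (ι k))
    (hΨ0inj : Function.Injective (Ψ 0))
    -- `Ψ(I^k) ∩ E^k = 0` for `k > 0`
    (hEI : ∀ k, 0 < k → ∀ (e : E k) (r : I k), ι k e = Ψ k r → e = 0)
    -- `ι` induces an isomorphism `H^*(E) ≅ H^*(F)`
    (hqis0 : ∀ x : F 0, dF 0 x = 0 → ∃ e : E 0, x = ι 0 e)
    (hqis_surj : ∀ k (x : F (k + 1)), dF (k + 1) x = 0 →
      ∃ (e : E (k + 1)) (b : F k), dE (k + 1) e = 0 ∧ x = ι (k + 1) e + dF k b)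
    (hqis_inj : ∀ k (e : E (k + 1)), dE (k + 1) e = 0 →
      (∃ b : F k, ι (k + 1) e = dF k b) → ∃ c : E k, e = dE k c)

    (Fb Ib : ℤ → Type*) [∀ k, AddCommGroup (Fb k)] [∀ k, AddCommGroup (Ib k)]
    (dFb : ∀ k, Fb k →+ Fb (k + 1)) (dIb : ∀ k, Ib k →+ Ib (k + 1))
    (ιb : ∀ k, E k →+ Fb k) (Ψb : ∀ k, Ib k →+ Fb k)
    (hdFb : ∀ k x, dFb (k + 1) (dFb k x) = 0)
    (hdIb : ∀ k x, dIb (k + 1) (dIb k x) = 0)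
    (hFbneg : ∀ k < (0 : ℤ), Subsingleton (Fb k))
    (hIbneg : ∀ k < (0 : ℤ), Subsingleton (Ib k))
    (hιdb : ∀ k x, dFb k (ιb k x) = ιb (k + 1) (dE k x))
    (hΨdb : ∀ k x, dFb k (Ψb k x) = Ψb (k + 1) (dIb k x))
    (hιinjb : ∀ k, Function.Injective (ιb k))
    (hΨ0injb : Function.Injective (Ψb 0))
    (hEIb : ∀ k, 0 < k → ∀ (e : E k) (r : Ib k), ιb k e = Ψb k r → e = 0)
    (hqis0b : ∀ x : Fb 0, dFb 0 x = 0 → ∃ e : E 0, x = ιb 0 e)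
    (hqis_surjb : ∀ k (x : Fb (k + 1)), dFb (k + 1) x = 0 →
      ∃ (e : E (k + 1)) (b : Fb k), dE (k + 1) e = 0 ∧ x = ιb (k + 1) e + dFb k b)
    (hqis_injb : ∀ k (e : E (k + 1)), dE (k + 1) e = 0 →
      (∃ b : Fb k, ιb (k + 1) e = dFb k b) → ∃ c : E k, e = dE k c)
    -- the quasi-isomorphism data: `ψ : I → Ī`, an injection `i : F ↪ F̄`, identity on `E`
    (iF : ∀ k, F k →+ Fb k) (ψ : ∀ k, I k →+ Ib k)
    (hiF_inj : ∀ k, Function.Injective (iF k))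
    (hiF_d : ∀ k x, dFb k (iF k x) = iF (k + 1) (dF k x))
    (hψ_d : ∀ k x, dIb k (ψ k x) = ψ (k + 1) (dI k x))
    (hcomm : ∀ k r, iF k (Ψ k r) = Ψb k (ψ k r))
    (hcommE : ∀ k e, iF k (ι k e) = ιb k e)
    -- `ψ` induces an isomorphism `H^*(I) ≅ H^*(Ī)`
    (hψ_inj0 : ∀ r : I 0, dI 0 r = 0 → ψ 0 r = 0 → r = 0)
    (hψ_inj : ∀ k (r : I (k + 1)), dI (k + 1) r = 0 →
      (∃ s : Ib k, ψ (k + 1) r = dIb k s) → ∃ s : I k, r = dI k s)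
    (hψ_surj0 : ∀ rb : Ib 0, dIb 0 rb = 0 → ∃ r : I 0, dI 0 r = 0 ∧ ψ 0 r = rb)
    (hψ_surj : ∀ k (rb : Ib (k + 1)), dIb (k + 1) rb = 0 →
      ∃ (r : I (k + 1)) (s : Ib k), dI (k + 1) r = 0 ∧ ψ (k + 1) r - rb = dIb k s)
    (k : ℤ) :
    ∃ φ : HhatGrp F E I dF dI ι Ψ k ≃+ HhatGrp Fb E Ib dFb dIb ιb Ψb k,
      ∀ (a : F (k + 1)) (r : I (k + 1 + 1)) (h : (a, r) ∈ sparkSub F E I dF dI ι Ψ k)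
        (h' : (iF (k + 1) a, ψ (k + 1 + 1) r) ∈ sparkSub Fb E Ib dFb dIb ιb Ψb k),
        φ (QuotientAddGroup.mk ⟨(a, r), h⟩) =
          QuotientAddGroup.mk ⟨(iF (k + 1) a, ψ (k + 1 + 1) r), h'⟩ := by
  classical
  -- the underlying map on pairs
  let g : F (k+1) × I (k+1+1) →+ Fb (k+1) × Ib (k+1+1) :=
    (iF (k+1)).prodMap (ψ (k+1+1))
  have hg : ∀ x : F (k+1) × I (k+1+1), g x = (iF (k+1) x.1, ψ (k+1+1) x.2) := fun _ => rfl
  have hg_spark : ∀ x ∈ sparkSub F E I dF dI ι Ψ k,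
      g x ∈ sparkSub Fb E Ib dFb dIb ιb Ψb k := by
    rintro ⟨a, r⟩ ⟨hr, e, he⟩
    refine ⟨?_, e, ?_⟩
    · show dIb _ (ψ _ r) = 0
      rw [hψ_d, hr, map_zero]
    · show dFb _ (iF _ a) = ιb _ e - Ψb _ (ψ _ r)
      rw [hiF_d, he, map_sub, hcommE, hcomm]
  have hg_bdry : ∀ x ∈ sparkBdry F I dF dI Ψ k,
      g x ∈ sparkBdry Fb Ib dFb dIb Ψb k := by
    rintro ⟨a, r⟩ ⟨b, s, h1, h2⟩
    simp only at h1 h2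
    refine ⟨iF k b, ψ (k+1) s, ?_, ?_⟩
    · show iF _ a = dFb k (iF k b) + Ψb (k+1) (ψ (k+1) s)
      rw [h1, map_add, hiF_d, hcomm]
    · show ψ _ r = -dIb (k+1) (ψ (k+1) s)
      rw [h2, map_neg, hψ_d]
  -- the induced homomorphism on spark classes
  let f : (sparkSub F E I dF dI ι Ψ k) →+ (sparkSub Fb E Ib dFb dIb ιb Ψb k) :=
    AddMonoidHom.codRestrict (g.comp (sparkSub F E I dF dI ι Ψ k).subtype) _
      (fun x => hg_spark x.1 x.2)
  have hf : ∀ x : sparkSub F E I dF dI ι Ψ k, (f x : Fb (k+1) × Ib (k+1+1)) = g x.1 :=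
    fun _ => rfl
  have h0 : ∀ x ∈ (sparkBdry F I dF dI Ψ k).addSubgroupOf (sparkSub F E I dF dI ι Ψ k),
      ((QuotientAddGroup.mk' ((sparkBdry Fb Ib dFb dIb Ψb k).addSubgroupOf
        (sparkSub Fb E Ib dFb dIb ιb Ψb k))).comp f) x = 0 := by
    intro x hx
    rw [AddMonoidHom.comp_apply, QuotientAddGroup.mk'_apply, QuotientAddGroup.eq_zero_iff,
      AddSubgroup.mem_addSubgroupOf]
    exact hg_bdry _ ((AddSubgroup.mem_addSubgroupOf).1 hx)
  let phi0 : HhatGrp F E I dF dI ι Ψ k →+ HhatGrp Fb E Ib dFb dIb ιb Ψb k :=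
    QuotientAddGroup.lift _ _ h0
  have hphi0 : ∀ z : sparkSub F E I dF dI ι Ψ k,
      phi0 (QuotientAddGroup.mk z) = QuotientAddGroup.mk (f z) := fun z => rfl
  -- injectivity
  have hinj : Function.Injective phi0 := by
    rw [injective_iff_map_eq_zero]
    intro x
    refine QuotientAddGroup.induction_on x ?_
    rintro ⟨⟨a, r⟩, hmem⟩ hx0
    obtain ⟨hr, e, he⟩ := hmem
    rw [hphi0] at hx0
    replace hx0 := (QuotientAddGroup.eq_zero_iff _).1 hx0
    rw [AddSubgroup.mem_addSubgroupOf] at hx0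
    obtain ⟨bb, sb, h1, h2⟩ := hx0
    simp only [hf, hg] at h1 h2
    -- step 1: r is a coboundary
    obtain ⟨s, hs⟩ := hψ_inj (k+1) r hr ⟨-sb, by rw [map_neg, ← h2]⟩
    -- step 2
    have hds1 : dIb (k+1) (sb + ψ (k+1) s) = 0 := by
      rw [map_add, hψ_d, ← hs, h2]; abel
    have hda1 : dF (k+1) (a + Ψ (k+1) s) = ι (k+1+1) e := by
      rw [map_add, hΨd, ← hs, he]; abel
    have he0 : e = 0 := by
      apply hιinjb (k+1+1)
      rw [map_zero]
      have h3 : dFb (k+1) (iF (k+1) (a + Ψ (k+1) s)) = ιb (k+1+1) e := by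
        rw [hiF_d, hda1, hcommE]
      rw [← h3]
      have h4 : iF (k+1) (a + Ψ (k+1) s) = dFb k bb + Ψb (k+1) (sb + ψ (k+1) s) := by
        rw [map_add, h1, hcomm, map_add]; abel
      rw [h4, map_add, hdFb, hΨdb, hds1]
      simp
    have hda1' : dF (k+1) (a + Ψ (k+1) s) = 0 := by rw [hda1, he0, map_zero]
    -- step 3
    obtain ⟨t, s2, ht, hts⟩ := hψ_surj k (sb + ψ (k+1) s) hds1
    -- step 4
    have hda2 : dF (k+1) (a + Ψ (k+1) s - Ψ (k+1) t) = 0 := by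
      rw [map_sub, hda1', hΨd, ht, map_zero, sub_zero]
    have hpt : ψ (k+1) t = dIb k s2 + (sb + ψ (k+1) s) := sub_eq_iff_eq_add.mp hts
    have hia2 : iF (k+1) (a + Ψ (k+1) s - Ψ (k+1) t) = dFb k (bb - Ψb k s2) := by
      rw [map_sub, map_add, h1, hcomm, hcomm, hpt, map_add, map_add, ← hΨdb, map_sub]
      abel
    -- step 5
    obtain ⟨e2, b2, he2, hab⟩ := hqis_surj k _ hda2
    obtain ⟨c2, hc2⟩ := hqis_injb k e2 he2 ⟨bb - Ψb k s2 - iF k b2, by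
      have : ιb (k+1) e2 = iF (k+1) (a + Ψ (k+1) s - Ψ (k+1) t) - dFb k (iF k b2) := by
        rw [← hcommE, hab, hiF_d, map_add]; abel
      rw [this, hia2, ← map_sub]⟩
    -- step 6: conclude
    refine (QuotientAddGroup.eq_zero_iff _).2 ?_
    rw [AddSubgroup.mem_addSubgroupOf]
    refine ⟨ι k c2 + b2, t - s, ?_, ?_⟩
    · show a = dF k (ι k c2 + b2) + Ψ (k+1) (t - s)
      have h5 : a = ι (k+1) e2 + dF k b2 + Ψ (k+1) t - Ψ (k+1) s := by
        rw [← hab]; abel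
      rw [h5, map_add, hιd, ← hc2, map_sub]; abel
    · show r = -dI (k+1) (t - s)
      rw [map_sub, ht, ← hs]; abel
  -- surjectivity
  have hsurj : Function.Surjective phi0 := by
    intro y
    refine QuotientAddGroup.induction_on y ?_
    rintro ⟨⟨ab, rb⟩, hmem⟩
    obtain ⟨hrb, eb, heb⟩ := hmem
    -- step 1
    obtain ⟨r, sb, hrc, hdiff⟩ := hψ_surj (k+1) rb hrb
    -- step 2
    have hdeb : dE (k+1+1) eb = 0 := by
      apply hιinjb
      rw [map_zero]
      have : dFb (k+1+1) (dFb (k+1) ab) = ιb (k+1+1+1) (dE (k+1+1) eb)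
          - Ψb (k+1+1+1) (dIb (k+1+1) rb) := by
        rw [heb, map_sub, hιdb, hΨdb]
      rw [hdFb, hrb, map_zero, sub_zero] at this
      exact this.symm
    -- step 3
    have hdw : dF (k+1+1) (ι (k+1+1) eb - Ψ (k+1+1) r) = 0 := by
      rw [map_sub, hιd, hΨd, hdeb, hrc, map_zero, map_zero, sub_zero]
    obtain ⟨e1, b1, he1, hw⟩ := hqis_surj (k+1) _ hdw
    have hiw : iF (k+1+1) (ι (k+1+1) eb - Ψ (k+1+1) r) = dFb (k+1) (ab - Ψb (k+1) sb) := by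
      rw [map_sub, hcommE, hcomm]
      have : Ψb (k+1+1) (ψ (k+1+1) r) = Ψb (k+1+1) rb + Ψb (k+1+1) (dIb (k+1) sb) := by
        rw [← map_add, ← hdiff]; congr 1; abel
      rw [this, map_sub, hΨdb, heb]; abel
    obtain ⟨c1, hc1⟩ := hqis_injb (k+1) e1 he1 ⟨ab - Ψb (k+1) sb - iF (k+1) b1, by
      have : ιb (k+1+1) e1 = iF (k+1+1) (ι (k+1+1) eb - Ψ (k+1+1) r)
          - dFb (k+1) (iF (k+1) b1) := by
        rw [← hcommE, hw, hiF_d, map_add]; abel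
      rw [this, hiw, ← map_sub]⟩
    have hda0 : dF (k+1) (ι (k+1) c1 + b1) = ι (k+1+1) eb - Ψ (k+1+1) r := by
      rw [map_add, hιd, ← hc1, ← hw]
    -- step 4
    have hdu : dFb (k+1) (ab - Ψb (k+1) sb - iF (k+1) (ι (k+1) c1 + b1)) = 0 := by
      rw [map_sub, hiF_d, hda0, ← hiw, map_sub]
      abel
    obtain ⟨e2, b2, he2, hu⟩ := hqis_surjb k _ hdu
    -- step 5: the preimage spark
    have hmemS : ((ι (k+1) c1 + b1 + ι (k+1) e2, r) : F (k+1) × I (k+1+1)) ∈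
        sparkSub F E I dF dI ι Ψ k := by
      refine ⟨hrc, eb, ?_⟩
      show dF (k+1) (ι (k+1) c1 + b1 + ι (k+1) e2) = _
      rw [map_add, hda0, hιd, he2, map_zero, add_zero]
    refine ⟨QuotientAddGroup.mk ⟨_, hmemS⟩, ?_⟩
    rw [hphi0]
    refine (QuotientAddGroup.eq).2 ?_
    rw [AddSubgroup.mem_addSubgroupOf]
    have hiFa : iF (k+1) (ι (k+1) c1 + b1 + ι (k+1) e2)
        = ab - Ψb (k+1) sb - dFb k b2 := by
      have he2' : ιb (k+1) e2
          = ab - Ψb (k+1) sb - iF (k+1) (ι (k+1) c1 + b1) - dFb k b2 := by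
        rw [hu]; abel
      rw [map_add, hcommE, he2']; abel
    refine ⟨b2, sb, ?_, ?_⟩
    · show -(iF (k+1) (ι (k+1) c1 + b1 + ι (k+1) e2)) + ab = dFb k b2 + Ψb (k+1) sb
      rw [hiFa]; abel
    · show -(ψ (k+1+1) r) + rb = -dIb (k+1) sb
      rw [← hdiff]; abel
  refine ⟨AddEquiv.ofBijective phi0 ⟨hinj, hsurj⟩, ?_⟩
  intro a r h h'
  show phi0 (QuotientAddGroup.mk ⟨(a, r), h⟩) = _
  rw [hphi0]
  congr 1
end

section
/- Let $X$ be a complex manifold and $p>0$. The projection morphism of spark complexes $(\pi_p,\pi_p,\mathrm{id})$ from the de Rham–Federer spark complex $(\mathcal{D}'^*(X),\mathcal{E}^*(X),\mathcal{IF}^*(X))$ to the Dolbeault–Federer spark complex of level $p$ induces a surjective group homomorphism $\Pi_p:\hat{\mathbf{H}}^k(X)\to\hat{\mathbf{H}}^k(X,p)$ for every $k$. -/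
/-- For a complex manifold `X` and `p > 0`, the projection morphism of
spark complexes `(π_p, π_p, id)` from the de Rham–Federer spark complex
`(𝒟'^*(X), ℰ^*(X), 𝓘𝓕^*(X))` to the Dolbeault–Federer spark complex of level `p` induces a
surjective group homomorphism `Π_p : 𝐇̂^k(X) → 𝐇̂^k(X, p)` for every `k`.
(Formalized abstractly: the ambient complex `(F, E, I)` is a homological spark complex, the
level-`p` truncation `(Fp, Ep, I)` is a homological spark complex, and the projections
`πFp, πEp` are surjective morphisms commuting with all the structure.) -/
theorem stmt6
    (F E I : ℤ → Type*) [∀ k, AddCommGroup (F k)] [∀ k, AddCommGroup (E k)]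
    [∀ k, AddCommGroup (I k)]
    (dF : ∀ k, F k →+ F (k + 1)) (dE : ∀ k, E k →+ E (k + 1))
    (dI : ∀ k, I k →+ I (k + 1))
    (ι : ∀ k, E k →+ F k) (Ψ : ∀ k, I k →+ F k)
    -- cochain complexes
    (hdF : ∀ k x, dF (k + 1) (dF k x) = 0)
    (hdE : ∀ k x, dE (k + 1) (dE k x) = 0)
    (hdI : ∀ k x, dI (k + 1) (dI k x) = 0)
    -- vanishing in negative degrees
    (hFneg : ∀ k < (0 : ℤ), Subsingleton (F k))
    (hEneg : ∀ k < (0 : ℤ), Subsingleton (E k))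
    (hIneg : ∀ k < (0 : ℤ), Subsingleton (I k))
    -- `ι` and `Ψ` are cochain maps, `ι` injective, `Ψ` injective in degree 0
    (hιd : ∀ k x, dF k (ι k x) = ι (k + 1) (dE k x))
    (hΨd : ∀ k x, dF k (Ψ k x) = Ψ (k + 1) (dI k x))
    (hιinj : ∀ k, Function.Injective (ι k))
    (hΨ0inj : Function.Injective (Ψ 0))
    -- `Ψ(I^k) ∩ E^k = 0` for `k > 0`
    (hEI : ∀ k, 0 < k → ∀ (e : E k) (r : I k), ι k e = Ψ k r → e = 0)
    -- `ι` induces an isomorphism `H^*(E) ≅ H^*(F)`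
    (hqis0 : ∀ x : F 0, dF 0 x = 0 → ∃ e : E 0, x = ι 0 e)
    (hqis_surj : ∀ k (x : F (k + 1)), dF (k + 1) x = 0 →
      ∃ (e : E (k + 1)) (b : F k), dE (k + 1) e = 0 ∧ x = ι (k + 1) e + dF k b)
    (hqis_inj : ∀ k (e : E (k + 1)), dE (k + 1) e = 0 →
      (∃ b : F k, ι (k + 1) e = dF k b) → ∃ c : E k, e = dE k c)

    -- the level-p truncated spark complex (e.g. `(𝒟'^*(X,p), ℰ^*(X,p), 𝓘𝓕^*(X))`)
    (Fp Ep : ℤ → Type*) [∀ k, AddCommGroup (Fp k)] [∀ k, AddCommGroup (Ep k)]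
    (dFp : ∀ k, Fp k →+ Fp (k + 1)) (dEp : ∀ k, Ep k →+ Ep (k + 1))
    (ιp : ∀ k, Ep k →+ Fp k) (Ψp : ∀ k, I k →+ Fp k)
    (hdFp : ∀ k x, dFp (k + 1) (dFp k x) = 0)
    (hdEp : ∀ k x, dEp (k + 1) (dEp k x) = 0)
    (hιdp : ∀ k x, dFp k (ιp k x) = ιp (k + 1) (dEp k x))
    (hΨdp : ∀ k x, dFp k (Ψp k x) = Ψp (k + 1) (dI k x))
    (hιinjp : ∀ k, Function.Injective (ιp k))
    (hEIp : ∀ k, 0 < k → ∀ (e : Ep k) (r : I k), ιp k e = Ψp k r → e = 0)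
    (hqis_surjp : ∀ k (x : Fp (k + 1)), dFp (k + 1) x = 0 →
      ∃ (e : Ep (k + 1)) (b : Fp k),
        dEp (k + 1) e = 0 ∧ x = ιp (k + 1) e + dFp k b)
    (hqis_injp : ∀ k (e : Ep (k + 1)), dEp (k + 1) e = 0 →
      (∃ b : Fp k, ιp (k + 1) e = dFp k b) → ∃ c : Ep k, e = dEp k c)
    -- the projections `π_p` (truncation to holomorphic degree `< p`)
    (πFp : ∀ k, F k →+ Fp k) (πEp : ∀ k, E k →+ Ep k)
    (hπFp_surj : ∀ k, Function.Surjective (πFp k))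
    (hπEp_surj : ∀ k, Function.Surjective (πEp k))
    (hπFp_d : ∀ k x, dFp k (πFp k x) = πFp (k + 1) (dF k x))
    (hπEp_d : ∀ k x, dEp k (πEp k x) = πEp (k + 1) (dE k x))
    (hπp_ι : ∀ k e, ιp k (πEp k e) = πFp k (ι k e))
    (hπp_Ψ : ∀ k r, Ψp k r = πFp k (Ψ k r))
    (k : ℤ) :
    ∃ Pip : HhatGrp F E I dF dI ι Ψ k →+ HhatGrp Fp Ep I dFp dI ιp Ψp k,
      (∀ (a : F (k + 1)) (r : I (k + 1 + 1)) (h : (a, r) ∈ sparkSub F E I dF dI ι Ψ k)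
        (h' : (πFp (k + 1) a, r) ∈ sparkSub Fp Ep I dFp dI ιp Ψp k),
        Pip (QuotientAddGroup.mk ⟨(a, r), h⟩) =
          QuotientAddGroup.mk ⟨(πFp (k + 1) a, r), h'⟩) ∧
      Function.Surjective Pip := by
  classical
  set S := sparkSub F E I dF dI ι Ψ k with hSdef
  set Sp := sparkSub Fp Ep I dFp dI ιp Ψp k with hSpdef
  set B := (sparkBdry F I dF dI Ψ k).addSubgroupOf S with hBdef
  set Bp := (sparkBdry Fp I dFp dI Ψp k).addSubgroupOf Sp with hBpdef
  have mem_proj : ∀ x : F (k + 1) × I (k + 1 + 1), x ∈ S →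
      (πFp (k + 1) x.1, x.2) ∈ Sp := by
    rintro ⟨a, r⟩ ⟨hr, e, he⟩
    refine ⟨hr, πEp (k + 1 + 1) e, ?_⟩
    rw [hπFp_d, he, map_sub, ← hπp_ι, ← hπp_Ψ]
  let g : S →+ Fp (k + 1) × I (k + 1 + 1) :=
    { toFun := fun x => (πFp (k + 1) x.1.1, x.1.2)
      map_zero' := by simp
      map_add' := by intro x y; simp }
  have hg : ∀ x : S, g x ∈ Sp := fun x => mem_proj x.1 x.2
  let g' : S →+ Sp := AddMonoidHom.codRestrict g Sp hg
  let f : S →+ HhatGrp Fp Ep I dFp dI ιp Ψp k :=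
    (QuotientAddGroup.mk' Bp).comp g'
  have hker : ∀ x ∈ B, f x = 0 := by
    rintro ⟨⟨a, r⟩, hx⟩ hb
    rw [hBdef, AddSubgroup.mem_addSubgroupOf] at hb
    obtain ⟨b, s, h1, h2⟩ := hb
    simp only at h1 h2
    show QuotientAddGroup.mk' Bp (g' _) = 0
    rw [QuotientAddGroup.mk'_apply]
    rw [QuotientAddGroup.eq_zero_iff]
    rw [hBpdef, AddSubgroup.mem_addSubgroupOf]
    refine ⟨πFp k b, s, ?_, ?_⟩
    · show πFp (k + 1) a = _
      rw [h1, map_add, ← hπFp_d, ← hπp_Ψ]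
    · exact h2
  refine ⟨QuotientAddGroup.lift B f hker, ?_, ?_⟩
  case refine_1 =>
    intro a r h h'
    show f ⟨(a, r), h⟩ = _
    show QuotientAddGroup.mk (g' ⟨(a, r), h⟩) = _
    congr 1
  case refine_2 =>
    have hspec : ∀ (x : F (k + 1) × I (k + 1 + 1)) (h : x ∈ S),
        QuotientAddGroup.lift B f hker (QuotientAddGroup.mk ⟨x, h⟩) =
          QuotientAddGroup.mk (g' ⟨x, h⟩) := fun x h => rfl
    intro y
    obtain ⟨⟨⟨a', r⟩, hy⟩, rfl⟩ := QuotientAddGroup.mk_surjective y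
    obtain ⟨hr, e', he'⟩ := hy
    -- `e'` is closed
    have he'cl : dEp (k + 1 + 1) e' = 0 := by
      apply hιinjp (k + 1 + 1 + 1)
      rw [map_zero, ← hιdp]
      have : ιp (k + 1 + 1) e' = dFp (k + 1) a' + Ψp (k + 1 + 1) r := by
        rw [he']; abel
      rw [this, map_add, hdFp, hΨdp, hr]
      simp
    -- Step 2: realize `Ψ r` up to exact by `ι e₀` in the ambient complex
    have hΨr : dF (k + 1 + 1) (Ψ (k + 1 + 1) r) = 0 := by
      rw [hΨd, hr, map_zero]
    obtain ⟨e₀, b₀, he₀, hb₀⟩ := hqis_surj (k + 1) (Ψ (k + 1 + 1) r) hΨr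
    -- the basic ambient spark `(-b₀, r)`
    have hA0 : dF (k + 1) (-b₀) = ι (k + 1 + 1) e₀ - Ψ (k + 1 + 1) r := by
      rw [map_neg, eq_sub_iff_add_eq, hb₀]; abel
    -- Step 3: the defect `γ`
    set γ : Fp (k + 1) := a' + πFp (k + 1) b₀ with hγdef
    set η : Ep (k + 1 + 1) := e' - πEp (k + 1 + 1) e₀ with hηdef
    have hdb₀ : dF (k + 1) b₀ = Ψ (k + 1 + 1) r - ι (k + 1 + 1) e₀ := by
      rw [hb₀]; abel
    have hγd : dFp (k + 1) γ = ιp (k + 1 + 1) η := by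
      rw [hγdef, hηdef, map_add, he', hπFp_d, hdb₀, map_sub, ← hπp_ι,
        ← hπp_Ψ, map_sub]
      abel
    have hηcl : dEp (k + 1 + 1) η = 0 := by
      rw [hηdef, map_sub, he'cl, hπEp_d, he₀, map_zero, zero_sub, neg_zero]
    -- Step 4: `η` is exact
    obtain ⟨c₁, hc₁⟩ := hqis_injp (k + 1) η hηcl ⟨γ, hγd.symm⟩
    obtain ⟨ct, hct⟩ := hπEp_surj (k + 1) c₁
    -- Step 5: the closed remainder `γ'`
    set γ' : Fp (k + 1) := γ - ιp (k + 1) c₁ with hγ'def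
    have hγ'cl : dFp (k + 1) γ' = 0 := by
      rw [hγ'def, map_sub, hγd, hιdp, ← hc₁, sub_self]
    obtain ⟨ε, b'', hεcl, hγ'⟩ := hqis_surjp k γ' hγ'cl
    obtain ⟨et, het⟩ := hπEp_surj (k + 1) ε
    obtain ⟨bt, hbt⟩ := hπFp_surj k b''
    -- Step 6: the ambient spark
    set A : F (k + 1) := -b₀ + ι (k + 1) ct + ι (k + 1) et + dF k bt with hAdef
    have hAmem : (A, r) ∈ S := by
      refine ⟨hr, e₀ + dE (k + 1) ct + dE (k + 1) et, ?_⟩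
      show dF (k + 1) A = _
      rw [hAdef]
      simp only [map_add, hA0, ← hιd, hdF]
      abel
    have hπA : πFp (k + 1) A = a' := by
      have h1 : πFp (k + 1) (ι (k + 1) ct) = ιp (k + 1) c₁ := by
        rw [← hπp_ι, hct]
      have h2 : πFp (k + 1) (ι (k + 1) et) = ιp (k + 1) ε := by
        rw [← hπp_ι, het]
      have h3 : πFp (k + 1) (dF k bt) = dFp k b'' := by
        rw [← hπFp_d, hbt]
      have h4 : a' = γ' + ιp (k + 1) c₁ - πFp (k + 1) b₀ := by
        rw [hγ'def, hγdef]; abel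
      rw [hAdef, map_add, map_add, map_add, map_neg, h1, h2, h3, h4, hγ']
      abel
    refine ⟨QuotientAddGroup.mk ⟨(A, r), hAmem⟩, ?_⟩
    show QuotientAddGroup.mk (g' ⟨(A, r), hAmem⟩) = _
    congr 1
    refine Subtype.ext ?_
    show (πFp (k + 1) A, r) = (a', r)
    rw [hπA]
end

section
/- Let $\Pi_p: \hat{\mathbf{H}}^k(X)\to\hat{\mathbf{H}}^k(X,p)$ be the projection from de Rham–Federer spark classes to level-$p$ spark classes. Then $\ker(\Pi_p)$ consists exactly of those classes $\alpha\in\hat{\mathbf{H}}^k(X)$ admitting a representative spark of the form $(a,0)$ with $a$ a smooth form satisfying $\pi_p(a)=0$. In particular $\ker(\Pi_p)$ is contained in the subgroup $\hat{\mathbf{H}}^k_\infty(X)$ of classes representable by smooth forms. -/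
/-- The kernel of `Π_p : 𝐇̂^k(X) → 𝐇̂^k(X, p)` consists exactly of the
classes admitting a representative spark `(a, 0)` with `a` a smooth form (i.e. `a = ι e`)
satisfying `π_p a = 0`.  In particular `ker Π_p ⊆ 𝐇̂^k_∞(X)`, the classes representable by
smooth forms. -/
theorem stmt7
    (F E I : ℤ → Type*) [∀ k, AddCommGroup (F k)] [∀ k, AddCommGroup (E k)]
    [∀ k, AddCommGroup (I k)]
    (dF : ∀ k, F k →+ F (k + 1)) (dE : ∀ k, E k →+ E (k + 1))
    (dI : ∀ k, I k →+ I (k + 1))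
    (ι : ∀ k, E k →+ F k) (Ψ : ∀ k, I k →+ F k)
    -- cochain complexes
    (hdF : ∀ k x, dF (k + 1) (dF k x) = 0)
    (hdE : ∀ k x, dE (k + 1) (dE k x) = 0)
    (hdI : ∀ k x, dI (k + 1) (dI k x) = 0)
    -- vanishing in negative degrees
    (hFneg : ∀ k < (0 : ℤ), Subsingleton (F k))
    (hEneg : ∀ k < (0 : ℤ), Subsingleton (E k))
    (hIneg : ∀ k < (0 : ℤ), Subsingleton (I k))
    -- `ι` and `Ψ` are cochain maps, `ι` injective, `Ψ` injective in degree 0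
    (hιd : ∀ k x, dF k (ι k x) = ι (k + 1) (dE k x))
    (hΨd : ∀ k x, dF k (Ψ k x) = Ψ (k + 1) (dI k x))
    (hιinj : ∀ k, Function.Injective (ι k))
    (hΨ0inj : Function.Injective (Ψ 0))
    -- `Ψ(I^k) ∩ E^k = 0` for `k > 0`
    (hEI : ∀ k, 0 < k → ∀ (e : E k) (r : I k), ι k e = Ψ k r → e = 0)
    -- `ι` induces an isomorphism `H^*(E) ≅ H^*(F)`
    (hqis0 : ∀ x : F 0, dF 0 x = 0 → ∃ e : E 0, x = ι 0 e)
    (hqis_surj : ∀ k (x : F (k + 1)), dF (k + 1) x = 0 →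
      ∃ (e : E (k + 1)) (b : F k), dE (k + 1) e = 0 ∧ x = ι (k + 1) e + dF k b)
    (hqis_inj : ∀ k (e : E (k + 1)), dE (k + 1) e = 0 →
      (∃ b : F k, ι (k + 1) e = dF k b) → ∃ c : E k, e = dE k c)

    -- the level-p truncated spark complex (e.g. `(𝒟'^*(X,p), ℰ^*(X,p), 𝓘𝓕^*(X))`)
    (Fp Ep : ℤ → Type*) [∀ k, AddCommGroup (Fp k)] [∀ k, AddCommGroup (Ep k)]
    (dFp : ∀ k, Fp k →+ Fp (k + 1)) (dEp : ∀ k, Ep k →+ Ep (k + 1))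
    (ιp : ∀ k, Ep k →+ Fp k) (Ψp : ∀ k, I k →+ Fp k)
    (hdFp : ∀ k x, dFp (k + 1) (dFp k x) = 0)
    (hdEp : ∀ k x, dEp (k + 1) (dEp k x) = 0)
    (hιdp : ∀ k x, dFp k (ιp k x) = ιp (k + 1) (dEp k x))
    (hΨdp : ∀ k x, dFp k (Ψp k x) = Ψp (k + 1) (dI k x))
    (hιinjp : ∀ k, Function.Injective (ιp k))
    (hEIp : ∀ k, 0 < k → ∀ (e : Ep k) (r : I k), ιp k e = Ψp k r → e = 0)
    (hqis_surjp : ∀ k (x : Fp (k + 1)), dFp (k + 1) x = 0 →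
      ∃ (e : Ep (k + 1)) (b : Fp k),
        dEp (k + 1) e = 0 ∧ x = ιp (k + 1) e + dFp k b)
    (hqis_injp : ∀ k (e : Ep (k + 1)), dEp (k + 1) e = 0 →
      (∃ b : Fp k, ιp (k + 1) e = dFp k b) → ∃ c : Ep k, e = dEp k c)
    -- the projections `π_p` (truncation to holomorphic degree `< p`)
    (πFp : ∀ k, F k →+ Fp k) (πEp : ∀ k, E k →+ Ep k)
    (hπFp_surj : ∀ k, Function.Surjective (πFp k))
    (hπEp_surj : ∀ k, Function.Surjective (πEp k))
    (hπFp_d : ∀ k x, dFp k (πFp k x) = πFp (k + 1) (dF k x))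
    (hπEp_d : ∀ k x, dEp k (πEp k x) = πEp (k + 1) (dE k x))
    (hπp_ι : ∀ k e, ιp k (πEp k e) = πFp k (ι k e))
    (hπp_Ψ : ∀ k r, Ψp k r = πFp k (Ψ k r))
    -- the filtration lemma: a current killed by `π_p` whose differential is a smooth form
    -- killed by `π_p` is, modulo exact currents, a smooth form killed by `π_p`
    (hfilt : ∀ m (a : F (m + 1)), πFp (m + 1) a = 0 →
      (∃ e : E (m + 1 + 1), dF (m + 1) a = ι (m + 1 + 1) e ∧ πEp (m + 1 + 1) e = 0) →
      ∃ (e' : E (m + 1)) (b : F m), πEp (m + 1) e' = 0 ∧ a = ι (m + 1) e' + dF m b)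
    (k : ℤ)
    -- the projection homomorphism `Π_p` induced by `(a, r) ↦ (π_p a, r)`
    (Pip : HhatGrp F E I dF dI ι Ψ k →+ HhatGrp Fp Ep I dFp dI ιp Ψp k)
    (hPip : ∀ (a : F (k + 1)) (r : I (k + 1 + 1)) (h : (a, r) ∈ sparkSub F E I dF dI ι Ψ k)
      (h' : (πFp (k + 1) a, r) ∈ sparkSub Fp Ep I dFp dI ιp Ψp k),
      Pip (QuotientAddGroup.mk ⟨(a, r), h⟩) =
        QuotientAddGroup.mk ⟨(πFp (k + 1) a, r), h'⟩) :
    (∀ α : HhatGrp F E I dF dI ι Ψ k,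
      Pip α = 0 ↔
      ∃ (e : E (k + 1)) (h : (ι (k + 1) e, (0 : I (k + 1 + 1))) ∈
          sparkSub F E I dF dI ι Ψ k),
        πEp (k + 1) e = 0 ∧ α = QuotientAddGroup.mk ⟨(ι (k + 1) e, 0), h⟩) ∧
    -- in particular, `ker Π_p` is contained in the classes representable by smooth forms
    (∀ α : HhatGrp F E I dF dI ι Ψ k, Pip α = 0 →
      ∃ (e : E (k + 1)) (h : (ι (k + 1) e, (0 : I (k + 1 + 1))) ∈
          sparkSub F E I dF dI ι Ψ k),
        α = QuotientAddGroup.mk ⟨(ι (k + 1) e, 0), h⟩) := by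
  have key : ∀ α : HhatGrp F E I dF dI ι Ψ k,
      Pip α = 0 ↔
      ∃ (e : E (k + 1)) (h : (ι (k + 1) e, (0 : I (k + 1 + 1))) ∈
          sparkSub F E I dF dI ι Ψ k),
        πEp (k + 1) e = 0 ∧ α = QuotientAddGroup.mk ⟨(ι (k + 1) e, 0), h⟩ := by
    intro α
    refine QuotientAddGroup.induction_on α ?_
    rintro ⟨⟨a, r⟩, hmem⟩
    have hmem2 : dI (k + 1 + 1) r = 0 ∧
        ∃ e : E (k + 1 + 1), dF (k + 1) a = ι (k + 1 + 1) e - Ψ (k + 1 + 1) r := hmem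
    obtain ⟨hr, e0, he0⟩ := hmem2
    constructor
    · intro hα
      -- image spark membership
      have h' : (πFp (k + 1) a, r) ∈ sparkSub Fp Ep I dFp dI ιp Ψp k := by
        refine ⟨hr, πEp (k + 1 + 1) e0, ?_⟩
        rw [hπFp_d, he0, map_sub, hπp_ι, hπp_Ψ]
      rw [hPip a r hmem h'] at hα
      have hbd := (QuotientAddGroup.eq_zero_iff _).mp hα
      rw [AddSubgroup.mem_addSubgroupOf] at hbd
      obtain ⟨b', s, h1, h2⟩ := hbd
      simp only at h1 h2
      obtain ⟨b, rfl⟩ := hπFp_surj k b'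
      -- the modified representative
      set a' : F (k + 1) := a - dF k b - Ψ (k + 1) s with ha'def
      have hπa' : πFp (k + 1) a' = 0 := by
        rw [ha'def]
        simp only [map_sub]
        rw [← hπFp_d, ← hπp_Ψ, h1]
        abel
      have hrs : r + dI (k + 1) s = 0 := by rw [h2]; abel
      have hda' : dF (k + 1) a' = ι (k + 1 + 1) e0 := by
        rw [ha'def]
        simp only [map_sub]
        rw [he0, hdF, hΨd]
        have hΨ0 : Ψ (k + 1 + 1) r + Ψ (k + 1 + 1) (dI (k + 1) s) = 0 := by
          rw [← map_add, hrs, map_zero]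
        rw [sub_zero, sub_sub, hΨ0, sub_zero]
      have hπe0 : πEp (k + 1 + 1) e0 = 0 := by
        apply hιinjp (k + 1 + 1)
        rw [hπp_ι, map_zero, ← hda', ← hπFp_d, hπa', map_zero]
      obtain ⟨e', b2, hπe', ha'⟩ := hfilt k a' hπa' ⟨e0, hda', hπe0⟩
      have hde' : dF (k + 1) (ι (k + 1) e') = ι (k + 1 + 1) e0 := by
        have : ι (k + 1) e' = a' - dF k b2 := by rw [ha']; abel
        rw [this, map_sub, hda', hdF, sub_zero]
      have hmem' : (ι (k + 1) e', (0 : I (k + 1 + 1))) ∈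
          sparkSub F E I dF dI ι Ψ k := by
        refine ⟨map_zero _, e0, ?_⟩
        rw [hde', map_zero, sub_zero]
      refine ⟨e', hmem', hπe', ?_⟩
      refine QuotientAddGroup.eq.mpr ?_
      rw [AddSubgroup.mem_addSubgroupOf]
      refine ⟨-(b + b2), -s, ?_, ?_⟩
      · show -a + ι (k + 1) e' = dF k (-(b + b2)) + Ψ (k + 1) (-s)
        have : ι (k + 1) e' = a' - dF k b2 := by rw [ha']; abel
        rw [this, ha'def]
        simp only [map_neg, map_add]
        abel
      · show -r + 0 = -dI (k + 1) (-s)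
        rw [map_neg, neg_neg, ← hrs]
        abel
    · rintro ⟨e, h, hpe, hα⟩
      have h0 : πFp (k + 1) (ι (k + 1) e) = 0 := by
        rw [← hπp_ι, hpe, map_zero]
      have h' : (πFp (k + 1) (ι (k + 1) e), (0 : I (k + 1 + 1))) ∈
          sparkSub Fp Ep I dFp dI ιp Ψp k := by
        refine ⟨map_zero _, 0, ?_⟩
        rw [h0, map_zero, map_zero, map_zero, sub_zero]
      rw [hα, hPip _ _ h h']
      have hz : (⟨(πFp (k + 1) (ι (k + 1) e), (0 : I (k + 1 + 1))), h'⟩ :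
          sparkSub Fp Ep I dFp dI ιp Ψp k) = 0 := by
        apply Subtype.ext
        show (πFp (k + 1) (ι (k + 1) e), (0 : I (k + 1 + 1))) = (0, 0)
        rw [h0]
      rw [hz, QuotientAddGroup.mk_zero]
      rfl
  refine ⟨key, fun α hα => ?_⟩
  obtain ⟨e, h, _, heq⟩ := (key α).mp hα
  exact ⟨e, h, heq⟩
end
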